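/- arXiv:2510.05658 — 6 statements merged into one kernel-verified Lean document; each statement's English description precedes it below -/
import Mathlib

section
/- Let S = (E, ρ) be a ranked set. Then in ℤ[x,y] the polynomial x·y − x − y divides T_S(x,y) − x^{ρ(E)}·y^{|E|−ρ(E)}; equivalently, T_S(x,y) ≡ x^{ρ(E)} y^{|E|−ρ(E)} (mod xy − x − y). (In particular, substituting x = y/(y−1) one gets (y−1)^{ρ(E)}·T_S(y/(y−1), y) = y^{|E|}.) -/
set_option maxHeartbeats 1000000
set_option synthInstance.maxHeartbeats 200000


/-- For a ranked set `S = (E, ρ)` (a finite set `E` with `ρ : 2^E → ℤ`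
satisfying `ρ(∅) = 0`, `ρ(A) ≤ ρ(E)` and `ρ(A) ≤ |A|` for all `A ⊆ E`), the polynomial
`x·y − x − y` divides `T_S(x,y) − x^{ρ(E)}·y^{|E|−ρ(E)}` in `ℤ[x,y]`, i.e.
`T_S(x,y) ≡ x^{ρ(E)} y^{|E|−ρ(E)} (mod xy − x − y)`. Here
`T_S(x,y) = Σ_{A ⊆ E} (x−1)^{ρ(E)−ρ(A)} (y−1)^{|A|−ρ(A)}`, with `x = X 0`, `y = X 1`. -/
theorem tutte_congr_mod_hyperbola {α : Type*} (E : Finset α) (ρ : Finset α → ℤ)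
    (hρ0 : ρ ∅ = 0) (hρE : ∀ A ⊆ E, ρ A ≤ ρ E) (hρcard : ∀ A ⊆ E, ρ A ≤ (A.card : ℤ)) :
    (MvPolynomial.X 0 * MvPolynomial.X 1 - MvPolynomial.X 0 - MvPolynomial.X 1 :
        MvPolynomial (Fin 2) ℤ) ∣
      (∑ A ∈ E.powerset,
          (MvPolynomial.X 0 - 1) ^ (ρ E - ρ A).toNat *
            (MvPolynomial.X 1 - 1) ^ ((A.card : ℤ) - ρ A).toNat)
        - MvPolynomial.X 0 ^ (ρ E).toNat *
            MvPolynomial.X 1 ^ ((E.card : ℤ) - ρ E).toNat := by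
  classical
  have hE0 : (0:ℤ) ≤ ρ E := by
    have := hρE ∅ (Finset.empty_subset E); omega
  have hEcard : ρ E ≤ (E.card : ℤ) := hρcard E le_rfl
  set x : MvPolynomial (Fin 2) ℤ := MvPolynomial.X 0 with hx
  set y : MvPolynomial (Fin 2) ℤ := MvPolynomial.X 1 with hy
  rw [← Ideal.mem_span_singleton, ← Ideal.Quotient.eq]
  set f := Ideal.Quotient.mk (Ideal.span {x*y - x - y}) with hf
  have hmemp : x*y - x - y ∈ Ideal.span {x*y - x - y} :=
    Ideal.subset_span (Set.mem_singleton _)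
  have huv : f (x-1) * f (y-1) = 1 := by
    rw [← map_mul, ← map_one f, Ideal.Quotient.eq]
    have : (x-1) * (y-1) - 1 = x*y - x - y := by ring
    rw [this]; exact hmemp
  have hxy : f x * f (y-1) = f y := by
    rw [← map_mul, Ideal.Quotient.eq]
    have : x * (y-1) - y = x*y - x - y := by ring
    rw [this]; exact hmemp
  have hu : (f (x-1))^(ρ E).toNat * (f (y-1))^(ρ E).toNat = 1 := by
    rw [← mul_pow, huv, one_pow]
  set r := (ρ E).toNat with hr
  set v := f (y-1) with hv
  -- cancellation lemma
  have cancel : ∀ A B, v^r * A = v^r * B → A = B := by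
    intro A B h
    linear_combination (f (x-1))^r * h - (A - B) * hu
  apply cancel
  rw [map_sum, Finset.mul_sum]
  -- compute each summand
  have hterm : ∀ A ∈ E.powerset,
      v^r * f ((x - 1) ^ (ρ E - ρ A).toNat * (y - 1) ^ ((A.card : ℤ) - ρ A).toNat)
        = v ^ A.card := by
    intro A hA
    have hAE := Finset.mem_powerset.mp hA
    have h1 : ρ A ≤ ρ E := hρE A hAE
    have h2 : ρ A ≤ (A.card : ℤ) := hρcard A hAE
    set a := (ρ E - ρ A).toNat with ha
    set b := ((A.card : ℤ) - ρ A).toNat with hb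
    have hab : r + b = a + A.card := by omega
    rw [map_mul, map_pow, map_pow]
    calc v^r * ((f (x-1))^a * v^b)
        = (f (x-1))^a * v^(r+b) := by rw [pow_add]; ring
      _ = (f (x-1))^a * v^(a + A.card) := by rw [hab]
      _ = (f (x-1) * v)^a * v^A.card := by rw [mul_pow, pow_add]; ring
      _ = v ^ A.card := by rw [huv, one_pow, one_mul]
  rw [Finset.sum_congr rfl hterm]
  -- RHS
  have hfy : f y = v + 1 := by
    have h : y - 1 + 1 = y := by ring
    rw [hv, ← map_one f, ← f.map_add, h]
  have hsum : ∑ A ∈ E.powerset, v ^ A.card = (f y) ^ E.card := by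
    have := Finset.prod_add (fun _ : α => v) (fun _ => 1) E
    simp only [Finset.prod_const, mul_one, one_pow, Finset.prod_const_one] at this
    rw [hfy]; exact this.symm
  rw [hsum]
  have hrs : r + ((E.card : ℤ) - ρ E).toNat = E.card := by omega
  rw [map_mul, map_pow, map_pow]
  calc (f y) ^ E.card = (f y)^r * (f y)^(((E.card : ℤ) - ρ E).toNat) := by
        rw [← pow_add, hrs]
    _ = (f x * v)^r * (f y)^(((E.card : ℤ) - ρ E).toNat) := by rw [hxy]
    _ = v ^ r * ((f x)^r * (f y)^(((E.card : ℤ) - ρ E).toNat)) := by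
        rw [mul_pow]; ring
end

section
/- Let R be an integral domain, n ∈ ℕ, r ∈ ℤ, and let U ∈ R[x,y] be an (n,r)-Brylawski polynomial with some constant c ∈ R∖{0}. Then deg_x U ≥ r and deg_y U ≥ n − r (as inequalities of integers). -/
open Polynomial

/-- Evaluation `U(Y/(Y−1), Y)` in the rational function field over the fraction field of `R`. -/
noncomputable def brylEval (R : Type*) [CommRing R] [IsDomain R]
    (U : Polynomial (Polynomial R)) : RatFunc (FractionRing R) :=
  Polynomial.eval₂
    ((algebraMap (Polynomial (FractionRing R)) (RatFunc (FractionRing R))).comp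
      (Polynomial.mapRingHom (algebraMap R (FractionRing R))))
    (RatFunc.X / (RatFunc.X - 1)) U

/-- `U ∈ (R[y])[x]` is an `(n,r)`-Brylawski polynomial with constant `c`, i.e.
`(Y−1)^r · U(Y/(Y−1), Y) = c·Y^n` holds in `K(Y)`, `K` the fraction field of `R`. -/
noncomputable def IsBrylawski (R : Type*) [CommRing R] [IsDomain R] (n : ℕ) (r : ℤ) (c : R)
    (U : Polynomial (Polynomial R)) : Prop :=
  (RatFunc.X - 1 : RatFunc (FractionRing R)) ^ r * brylEval R U
    = RatFunc.C (algebraMap R (FractionRing R) c) * RatFunc.X ^ n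

/-- `deg_y` of a bivariate polynomial in `(R[y])[x]`: the largest `j` such that some
coefficient `u_{i,j}` is nonzero. -/
noncomputable def degY {R : Type*} [CommRing R] (U : Polynomial (Polynomial R)) : ℕ :=
  U.support.sup fun i => (U.coeff i).natDegree

/-- If `U` is an (n,r)-Brylawski polynomial over an integral domain `R`
with constant `c ≠ 0`, then `deg_x U ≥ r` and `deg_y U ≥ n − r` as integers. -/
theorem brylawski_degree_bounds (R : Type*) [CommRing R] [IsDomain R]
    (n : ℕ) (r : ℤ) (c : R) (hc : c ≠ 0)
    (U : Polynomial (Polynomial R)) (hU : IsBrylawski R n r c U) :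
    r ≤ (U.natDegree : ℤ) ∧ (n : ℤ) - r ≤ (degY U : ℤ) := by
  classical
  unfold IsBrylawski at hU
  set K := FractionRing R with hK
  have hc' : algebraMap R K c ≠ 0 :=
    fun h => hc ((map_eq_zero_iff _ (IsFractionRing.injective R K)).mp h)
  set d := U.natDegree with hd
  set a := r.toNat with ha
  set rm := (-r).toNat with hrm
  set A := algebraMap (Polynomial K) (RatFunc K) with hA
  have hAX : A Polynomial.X = RatFunc.X := RatFunc.algebraMap_X
  have hAinj : Function.Injective A := IsFractionRing.injective _ _
  have hXC : (Polynomial.X - 1 : Polynomial K) ≠ 0 := by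
    rw [← Polynomial.C_1]; exact Polynomial.X_sub_C_ne_zero 1
  have hAX1 : A (Polynomial.X - 1) = RatFunc.X - 1 := by rw [map_sub, hAX, map_one]
  have hx1 : (RatFunc.X - 1 : RatFunc K) ≠ 0 := by
    rw [← hAX1]
    exact fun h => hXC (hAinj (by rw [h, map_zero]))
  set P : Polynomial K :=
    ∑ i ∈ U.support, ((U.coeff i).map (algebraMap R K)) * Polynomial.X ^ i
      * (Polynomial.X - 1) ^ (d - i) with hP
  have h1 : brylEval R U * (RatFunc.X - 1) ^ d = A P := by
    rw [brylEval, Polynomial.eval₂_eq_sum, Polynomial.sum_def, Finset.sum_mul, hP, map_sum]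
    refine Finset.sum_congr rfl fun i hi => ?_
    have hid : i ≤ d := Polynomial.le_natDegree_of_ne_zero (Polynomial.mem_support_iff.mp hi)
    have ht : (RatFunc.X / (RatFunc.X - 1) : RatFunc K) ^ i * (RatFunc.X - 1) ^ d
        = RatFunc.X ^ i * (RatFunc.X - 1) ^ (d - i) := by
      rw [div_pow, div_mul_eq_mul_div, mul_div_assoc, div_eq_mul_inv, ← pow_sub₀ _ hx1 hid]
    rw [map_mul, map_mul, map_pow, map_pow, hAX, hAX1, RingHom.comp_apply,
      Polynomial.coe_mapRingHom, mul_assoc, ht, mul_assoc]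
  -- key identity in RatFunc K
  have key : A ((Polynomial.X - 1) ^ a * P)
      = A (Polynomial.C (algebraMap R K c) * Polynomial.X ^ n
          * (Polynomial.X - 1) ^ (rm + d)) := by
    rw [map_mul, map_mul, map_mul, map_pow, map_pow, map_pow, hAX1, hAX,
      RatFunc.algebraMap_C, ← h1, ← mul_assoc]
    have hz : ((a + d : ℕ) : ℤ) = r + ((rm + d : ℕ) : ℤ) := by push_cast; omega
    calc (RatFunc.X - 1 : RatFunc K) ^ a * brylEval R U * (RatFunc.X - 1) ^ d
        = (RatFunc.X - 1) ^ (((a + d : ℕ)) : ℤ) * brylEval R U := by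
          rw [zpow_natCast, pow_add]; ring
      _ = (RatFunc.X - 1) ^ (r + ((rm + d : ℕ) : ℤ)) * brylEval R U := by rw [hz]
      _ = ((RatFunc.X - 1) ^ r * brylEval R U) * (RatFunc.X - 1) ^ ((rm + d : ℕ) : ℤ) := by
          rw [zpow_add₀ hx1]; ring
      _ = RatFunc.C (algebraMap R K c) * RatFunc.X ^ n * (RatFunc.X - 1) ^ (rm + d) := by
          rw [hU, zpow_natCast]
  have hpoly : (Polynomial.X - 1 : Polynomial K) ^ a * P
      = Polynomial.C (algebraMap R K c) * Polynomial.X ^ n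
          * (Polynomial.X - 1) ^ (rm + d) := hAinj key
  have hRne : (Polynomial.C (algebraMap R K c) * Polynomial.X ^ n
      * (Polynomial.X - 1 : Polynomial K) ^ (rm + d)) ≠ 0 :=
    mul_ne_zero (mul_ne_zero (by simpa using hc') (pow_ne_zero _ Polynomial.X_ne_zero))
      (pow_ne_zero _ hXC)
  have hPne : P ≠ 0 := by
    intro h
    rw [h, mul_zero] at hpoly
    exact hRne hpoly.symm
  -- root multiplicity at 1
  have hmul := congrArg (Polynomial.rootMultiplicity 1) hpoly
  rw [Polynomial.rootMultiplicity_mul (hpoly ▸ hRne),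
    Polynomial.rootMultiplicity_mul hRne,
    Polynomial.rootMultiplicity_mul (mul_ne_zero (by simpa using hc')
      (pow_ne_zero _ Polynomial.X_ne_zero))] at hmul
  have hm1 : Polynomial.rootMultiplicity 1 ((Polynomial.X - 1 : Polynomial K) ^ a) = a := by
    rw [← Polynomial.C_1]; exact Polynomial.rootMultiplicity_X_sub_C_pow 1 a
  have hm2 : Polynomial.rootMultiplicity 1 ((Polynomial.X - 1 : Polynomial K) ^ (rm + d))
      = rm + d := by
    rw [← Polynomial.C_1]; exact Polynomial.rootMultiplicity_X_sub_C_pow 1 (rm + d)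
  have hm3 : Polynomial.rootMultiplicity 1 (Polynomial.C (algebraMap R K c)) = 0 :=
    Polynomial.rootMultiplicity_eq_zero (by simp [Polynomial.IsRoot, hc'])
  have hm4 : Polynomial.rootMultiplicity 1 ((Polynomial.X : Polynomial K) ^ n) = 0 :=
    Polynomial.rootMultiplicity_eq_zero (by simp [Polynomial.IsRoot])
  rw [hm1, hm2, hm3, hm4] at hmul
  -- degrees
  have hdeg := congrArg Polynomial.natDegree hpoly
  rw [Polynomial.natDegree_mul (pow_ne_zero _ hXC) hPne,
    Polynomial.natDegree_mul (mul_ne_zero (by simpa using hc')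
      (pow_ne_zero _ Polynomial.X_ne_zero)) (pow_ne_zero _ hXC),
    Polynomial.natDegree_mul (by simpa using hc') (pow_ne_zero _ Polynomial.X_ne_zero),
    Polynomial.natDegree_pow, Polynomial.natDegree_C] at hdeg
  have hXd : (Polynomial.X - 1 : Polynomial K).natDegree = 1 := by
    rw [← Polynomial.C_1]; exact Polynomial.natDegree_X_sub_C 1
  simp only [Polynomial.natDegree_pow, Polynomial.natDegree_X_pow, hXd, Polynomial.natDegree_X, mul_one, zero_add] at hdeg
  -- bound on natDegree P
  have hdegP : P.natDegree ≤ degY U + d := by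
    rw [hP]
    refine Polynomial.natDegree_sum_le_of_forall_le _ _ fun i hi => ?_
    have hid : i ≤ d := Polynomial.le_natDegree_of_ne_zero (Polynomial.mem_support_iff.mp hi)
    have h1 : ((U.coeff i).map (algebraMap R K)).natDegree ≤ degY U :=
      le_trans Polynomial.natDegree_map_le (Finset.le_sup (f := fun j => (U.coeff j).natDegree) hi)
    calc (((U.coeff i).map (algebraMap R K)) * Polynomial.X ^ i
          * (Polynomial.X - 1) ^ (d - i)).natDegree
        ≤ (((U.coeff i).map (algebraMap R K)) * Polynomial.X ^ i).natDegree
            + ((Polynomial.X - 1 : Polynomial K) ^ (d - i)).natDegree :=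
          Polynomial.natDegree_mul_le
      _ ≤ (((U.coeff i).map (algebraMap R K)).natDegree
            + ((Polynomial.X : Polynomial K) ^ i).natDegree)
            + ((Polynomial.X - 1 : Polynomial K) ^ (d - i)).natDegree :=
          Nat.add_le_add_right Polynomial.natDegree_mul_le _
      _ ≤ degY U + d := by
          rw [Polynomial.natDegree_X_pow, Polynomial.natDegree_pow, hXd]
          omega
  omega
end

section
/- Let R be a unique factorization domain and let U ∈ R[x,y] be an (n,r)-Brylawski polynomial with constant c ∈ R∖{0}. If V ∈ R[x,y] involves only the variable x (i.e. deg_y V = 0) and V divides U in R[x,y], then there exist a ∈ R∖{0} and k, ℓ ∈ ℕ such that V = a·(x−1)^k·x^ℓ. Likewise, if V involves only the variable y and V divides U, then V = b·(y−1)^k·y^ℓ for some b ∈ R∖{0} and k, ℓ ∈ ℕ. -/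
open Polynomial

/-!
Substitute `x ↦ Y/(Y - 1)`, `y ↦ Y` and clear denominators: for `B` of `x`-degree at most `d`,
`(Y - 1)^d · B(Y/(Y - 1), Y)` is a polynomial in `Y` over the fraction field `K`. If `V W = U`,
the Brylawski identity makes the cleared images of `V` and `W` multiply, up to powers of `Y - 1`,
to `c Y^n (Y - 1)^M`, so by unique factorization in `K[Y]` the cleared image of `V` is
`e (Y - 1)^j Y^i`. When `V` involves only `y`, the cleared image is `V` itself. When `V = v(x)`,
the cleared image is `(Y - 1)^d v(Y/(Y - 1))`, and as `x ↦ x/(x - 1)` is an involution, clearing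
once more recovers `v = e (x - 1)^(d - i - j) x^i`. Finally, the coefficient `e` comes from `R`,
being the leading coefficient of the image of `V`.
-/

section Field

variable {K : Type*} [Field K]

lemma ratFunc_X_sub_one_ne_zero : (RatFunc.X - 1 : RatFunc K) ≠ 0 := by
  rw [← RatFunc.algebraMap_X, ← map_one (algebraMap K[X] (RatFunc K)), ← map_sub,
    map_ne_zero_iff _ (RatFunc.algebraMap_injective K)]
  exact X_sub_C_ne_zero 1

lemma ratFunc_X_div_X_sub_one_sub_one :
    (RatFunc.X / (RatFunc.X - 1) - 1 : RatFunc K) = 1 / (RatFunc.X - 1) := by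
  rw [div_sub_one ratFunc_X_sub_one_ne_zero]
  ring

/-- `B(Y/(Y - 1), Y)` for `B ∈ K[Y][x]`. -/
noncomputable def evalAtRatio (B : K[X][X]) : RatFunc K :=
  B.eval₂ (algebraMap K[X] (RatFunc K)) (RatFunc.X / (RatFunc.X - 1))

/-- `(Y - 1)^d · B(Y/(Y - 1), Y)`, a polynomial in `Y` as long as `deg_x B ≤ d`. -/
noncomputable def clearedEval (B : K[X][X]) (d : ℕ) : K[X] :=
  ∑ i ∈ B.support, B.coeff i * X ^ i * (X - 1) ^ (d - i)

lemma algebraMap_clearedEval {B : K[X][X]} {d : ℕ} (hd : B.natDegree ≤ d) :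
    algebraMap K[X] (RatFunc K) (clearedEval B d) = (RatFunc.X - 1) ^ d * evalAtRatio B := by
  rw [evalAtRatio, eval₂_eq_sum, Polynomial.sum_def, clearedEval, map_sum, Finset.mul_sum]
  refine Finset.sum_congr rfl fun i hi => ?_
  have hid : i ≤ d := (le_natDegree_of_mem_supp i hi).trans hd
  rw [map_mul, map_mul, map_pow, map_pow, map_sub, RatFunc.algebraMap_X, map_one, div_pow]
  field_simp [ratFunc_X_sub_one_ne_zero]
  rw [mul_assoc, ← pow_add, Nat.sub_add_cancel hid]

lemma algebraMap_clearedEval_map_C {g : K[X]} {d : ℕ} (hd : g.natDegree ≤ d) :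
    algebraMap K[X] (RatFunc K) (clearedEval (g.map C) d)
      = (RatFunc.X - 1) ^ d * g.eval₂ RatFunc.C (RatFunc.X / (RatFunc.X - 1)) := by
  rw [algebraMap_clearedEval (by rwa [natDegree_map_eq_of_injective C_injective]),
    evalAtRatio, eval₂_map]
  congr 2

lemma clearedEval_C_zero (q : K[X]) : clearedEval (C q) 0 = q := by
  rcases eq_or_ne q 0 with rfl | hq
  · simp [clearedEval]
  · simp [clearedEval, support_C hq]

lemma natDegree_clearedEval_map_C_le {g : K[X]} {d : ℕ} (hd : g.natDegree ≤ d) :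
    (clearedEval (g.map C) d).natDegree ≤ d := by
  refine natDegree_sum_le_of_forall_le _ _ fun i hi => ?_
  have hid : i ≤ d := by
    rw [support_map_of_injective _ C_injective] at hi
    exact (le_natDegree_of_mem_supp i hi).trans hd
  rw [coeff_map]
  calc (C (g.coeff i) * X ^ i * (X - 1) ^ (d - i)).natDegree
      ≤ (C (g.coeff i) * X ^ i).natDegree + ((X - 1 : K[X]) ^ (d - i)).natDegree :=
        natDegree_mul_le
    _ ≤ i + (d - i) := by
        gcongr
        · exact natDegree_C_mul_le _ _ |>.trans (natDegree_X_pow_le i)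
        · simpa using natDegree_pow_le_of_le (d - i) (natDegree_X_sub_C_le (1 : K))
    _ = d := Nat.add_sub_cancel' hid

/-- The substitution `x ↦ x/(x - 1)` is an involution. -/
lemma clearedEval_clearedEval_map_C {g : K[X]} {d : ℕ} (hd : g.natDegree ≤ d) :
    clearedEval ((clearedEval (g.map C) d).map C) d = g := by
  apply RatFunc.algebraMap_injective K
  rw [algebraMap_clearedEval_map_C (natDegree_clearedEval_map_C_le hd), clearedEval,
    support_map_of_injective _ C_injective, eval₂_finsetSum, Finset.mul_sum]
  conv_rhs => rw [← sum_C_mul_X_pow_eq g, Polynomial.sum_def, map_sum]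
  refine Finset.sum_congr rfl fun i hi => ?_
  have hid : i ≤ d := (le_natDegree_of_mem_supp i hi).trans hd
  rw [coeff_map, eval₂_mul, eval₂_mul, eval₂_C, eval₂_X_pow, eval₂_pow, eval₂_sub, eval₂_X,
    eval₂_one, ratFunc_X_div_X_sub_one_sub_one, div_pow, div_pow, one_pow, map_mul, map_pow,
    RatFunc.algebraMap_C, RatFunc.algebraMap_X]
  field_simp [ratFunc_X_sub_one_ne_zero]
  rw [mul_assoc _ ((RatFunc.X - 1 : RatFunc K) ^ i), ← pow_add, Nat.add_sub_cancel' hid]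
  ring

lemma natDegree_C_mul_X_sub_one_pow_mul_X_pow {e : K} (he : e ≠ 0) (j i : ℕ) :
    (C e * (X - 1) ^ j * X ^ i : K[X]).natDegree = j + i := by
  compute_degree!

lemma clearedEval_map_C_monomial (a : K) {i j d : ℕ} (hd : i + j ≤ d) :
    clearedEval ((C a * (X - 1) ^ j * X ^ i).map C) d = C a * (X - 1) ^ (d - i - j) * X ^ i := by
  have hdeg : (C a * (X - 1) ^ j * X ^ i : K[X]).natDegree ≤ d := by
    rcases eq_or_ne a 0 with rfl | ha
    · simp
    · rw [natDegree_C_mul_X_sub_one_pow_mul_X_pow ha]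
      omega
  apply RatFunc.algebraMap_injective K
  rw [algebraMap_clearedEval_map_C hdeg]
  simp only [eval₂_mul, eval₂_C, eval₂_pow, eval₂_sub, eval₂_X, eval₂_one,
    ratFunc_X_div_X_sub_one_sub_one, div_pow, one_pow, map_mul, map_pow, map_sub, map_one,
    RatFunc.algebraMap_C, RatFunc.algebraMap_X]
  have hsplit : (RatFunc.X - 1 : RatFunc K) ^ d
      = (RatFunc.X - 1) ^ (d - i - j) * (RatFunc.X - 1) ^ (i + j) := by
    rw [← pow_add, Nat.sub_sub, Nat.sub_add_cancel hd]
  rw [hsplit]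
  field_simp [ratFunc_X_sub_one_ne_zero]
  ring

lemma exists_eq_of_clearedEval_map_C_eq {g : K[X]} {d : ℕ} {e : K} {j i : ℕ} (hd : g.natDegree ≤ d)
    (he : e ≠ 0) (hg : clearedEval (g.map C) d = C e * (X - 1) ^ j * X ^ i) :
    ∃ k, g = C e * (X - 1) ^ k * X ^ i := by
  have hij : i + j ≤ d := by
    simpa [hg, natDegree_C_mul_X_sub_one_pow_mul_X_pow he, add_comm] using
      natDegree_clearedEval_map_C_le hd
  refine ⟨d - i - j, ?_⟩
  rw [← clearedEval_clearedEval_map_C hd, hg, clearedEval_map_C_monomial e hij]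

lemma exists_eq_C_mul_of_dvd_X_sub_one_pow_mul_X_pow {p : K[X]} {m n : ℕ}
    (h : p ∣ (X - 1) ^ m * X ^ n) : ∃ (e : K) (j i : ℕ), e ≠ 0 ∧ p = C e * (X - 1) ^ j * X ^ i := by
  obtain ⟨p₁, p₂, h₁, h₂, rfl⟩ := exists_dvd_and_dvd_of_dvd_mul h
  have hprime : Prime (X - 1 : K[X]) := by simpa using prime_X_sub_C (1 : K)
  obtain ⟨j, -, hj⟩ := (dvd_prime_pow hprime m).mp h₁
  obtain ⟨i, -, hi⟩ := (dvd_prime_pow prime_X n).mp h₂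
  obtain ⟨u₁, rfl⟩ := hj.symm
  obtain ⟨u₂, rfl⟩ := hi.symm
  obtain ⟨e, he, hCe⟩ := Polynomial.isUnit_iff.mp (u₁ * u₂).isUnit
  refine ⟨e, j, i, he.ne_zero, ?_⟩
  rw [hCe, Units.val_mul]
  ring

lemma exists_clearedEval_eq_of_mul_eq {B B' : K[X][X]} {r : ℤ} {c : K} {n : ℕ} (hc : c ≠ 0)
    (h : (RatFunc.X - 1) ^ r * (evalAtRatio B * evalAtRatio B') = RatFunc.C c * RatFunc.X ^ n) :
    ∃ (e : K) (j i : ℕ), e ≠ 0 ∧ clearedEval B B.natDegree = C e * (X - 1) ^ j * X ^ i := by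
  set d := B.natDegree
  set d' := B'.natDegree
  obtain ⟨N, M, hNM⟩ : ∃ N M : ℕ, (d + d' + N : ℤ) = M + r :=
    ⟨(r - d - d').toNat, (d + d' - r).toNat, by omega⟩
  have hpow : (RatFunc.X - 1 : RatFunc K) ^ (d + d' + N)
      = (RatFunc.X - 1) ^ M * (RatFunc.X - 1) ^ r := by
    rw [← zpow_natCast, ← zpow_natCast _ M, ← zpow_add₀ ratFunc_X_sub_one_ne_zero, ← hNM]
    norm_cast
  have hpoly :
      clearedEval B d * (clearedEval B' d' * (X - 1) ^ N) = C c * ((X - 1) ^ M * X ^ n) := by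
    apply RatFunc.algebraMap_injective K
    rw [map_mul, map_mul, algebraMap_clearedEval le_rfl, algebraMap_clearedEval le_rfl]
    simp only [map_mul, map_pow, map_sub, map_one, RatFunc.algebraMap_X, RatFunc.algebraMap_C]
    linear_combination (RatFunc.X - 1) ^ M * h + evalAtRatio B * evalAtRatio B' * hpow
  have hunit : IsUnit (C c : K[X]) := isUnit_C.mpr (IsUnit.mk0 c hc)
  exact exists_eq_C_mul_of_dvd_X_sub_one_pow_mul_X_pow
    (hunit.dvd_mul_left.mp (Dvd.intro _ hpoly))

end Field

lemma exists_eq_map_C_of_degY_eq_zero {R : Type*} [CommRing R] {V : R[X][X]} (hV : degY V = 0) :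
    ∃ v : R[X], V = v.map C := by
  refine ⟨V.map constantCoeff, Polynomial.ext fun m => ?_⟩
  have hm : (V.coeff m).natDegree = 0 := by
    by_cases hmV : m ∈ V.support
    · exact Nat.le_zero.mp (hV ▸ Finset.le_sup (f := fun i => (V.coeff i).natDegree) hmV)
    · rw [notMem_support_iff.mp hmV, natDegree_zero]
  rw [coeff_map, coeff_map, constantCoeff_apply, ← eq_C_of_natDegree_eq_zero hm]

lemma exists_eq_C_mul_of_map_eq {R S : Type*} [CommRing R] [CommRing S]
    {f : R →+* S} (hf : Function.Injective f) {v : R[X]} {e : S} {j i : ℕ} (he : e ≠ 0)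
    (hv : v.map f = C e * (X - 1) ^ j * X ^ i) :
    ∃ a : R, a ≠ 0 ∧ v = C a * (X - 1) ^ j * X ^ i := by
  have hmonic : ((X - 1 : S[X]) ^ j * X ^ i).Monic := by
    simpa using ((monic_X_sub_C (1 : S)).pow j).mul (monic_X_pow i)
  have hlc : f v.leadingCoeff = e := by
    rw [← leadingCoeff_map_of_injective hf, hv, mul_assoc, leadingCoeff_mul_monic hmonic,
      leadingCoeff_C]
  refine ⟨v.leadingCoeff, fun h => he (by rw [← hlc, h, map_zero]), map_injective f hf ?_⟩
  simp [hv, hlc]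

lemma brylEval_eq_evalAtRatio_map (R : Type*) [CommRing R] [IsDomain R] (U : R[X][X]) :
    brylEval R U = evalAtRatio (U.map (mapRingHom (algebraMap R (FractionRing R)))) :=
  (eval₂_map _ _ _).symm

lemma IsBrylawski.exists_clearedEval_map_eq_of_dvd {R : Type*} [CommRing R] [IsDomain R] {n : ℕ}
    {r : ℤ} {c : R} {U V : R[X][X]} (hc : c ≠ 0) (hU : IsBrylawski R n r c U) (hdvd : V ∣ U) :
    ∃ (e : FractionRing R) (j i : ℕ), e ≠ 0 ∧
      clearedEval (V.map (mapRingHom (algebraMap R (FractionRing R))))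
        (V.map (mapRingHom (algebraMap R (FractionRing R)))).natDegree
        = C e * (X - 1) ^ j * X ^ i := by
  obtain ⟨W, rfl⟩ := hdvd
  rw [IsBrylawski, brylEval_eq_evalAtRatio_map, Polynomial.map_mul, evalAtRatio, eval₂_mul] at hU
  exact exists_clearedEval_eq_of_mul_eq
    ((map_ne_zero_iff _ (IsFractionRing.injective R (FractionRing R))).mpr hc) hU

theorem brylawski_univariate_factors_general (R : Type*) [CommRing R] [IsDomain R]
    (n : ℕ) (r : ℤ) (c : R) (hc : c ≠ 0)
    (U V : Polynomial (Polynomial R)) (hU : IsBrylawski R n r c U) (hdvd : V ∣ U) :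
    (degY V = 0 → ∃ (a : R) (k ℓ : ℕ), a ≠ 0 ∧
        V = Polynomial.C (Polynomial.C a) * (Polynomial.X - 1) ^ k * Polynomial.X ^ ℓ) ∧
    (V.natDegree = 0 → ∃ (b : R) (k ℓ : ℕ), b ≠ 0 ∧
        V = Polynomial.C (Polynomial.C b * (Polynomial.X - 1) ^ k * Polynomial.X ^ ℓ)) := by
  have hf : Function.Injective (algebraMap R (FractionRing R)) := IsFractionRing.injective R _
  obtain ⟨e, j, i, he, hV⟩ := hU.exists_clearedEval_map_eq_of_dvd hc hdvd
  refine ⟨fun hdegY => ?_, fun hdegX => ?_⟩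
  · obtain ⟨v, rfl⟩ := exists_eq_map_C_of_degY_eq_zero hdegY
    rw [Polynomial.map_map, mapRingHom_comp_C, ← Polynomial.map_map] at hV
    obtain ⟨k, hk⟩ :=
      exists_eq_of_clearedEval_map_C_eq (natDegree_map_eq_of_injective C_injective _).ge he hV
    obtain ⟨a, ha, rfl⟩ := exists_eq_C_mul_of_map_eq hf he hk
    exact ⟨a, k, i, ha, by simp⟩
  · obtain ⟨p, rfl⟩ : ∃ p, V = C p := ⟨_, eq_C_of_natDegree_eq_zero hdegX⟩
    rw [Polynomial.map_C, natDegree_C, clearedEval_C_zero] at hV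
    obtain ⟨b, hb, rfl⟩ := exists_eq_C_mul_of_map_eq hf he hV
    exact ⟨b, j, i, hb, rfl⟩

/-- Over a UFD `R`, any univariate divisor of an (n,r)-Brylawski polynomial
`U` is of the form `a·(x−1)^k·x^ℓ` (if it involves only `x`, i.e. `deg_y V = 0`) or
`b·(y−1)^k·y^ℓ` (if it involves only `y`, i.e. `deg_x V = 0`). -/
theorem brylawski_univariate_factors (R : Type*) [CommRing R] [IsDomain R]
    [UniqueFactorizationMonoid R] (n : ℕ) (r : ℤ) (c : R) (hc : c ≠ 0)
    (U V : Polynomial (Polynomial R)) (hU : IsBrylawski R n r c U) (hdvd : V ∣ U) :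
    (degY V = 0 → ∃ (a : R) (k ℓ : ℕ), a ≠ 0 ∧
        V = Polynomial.C (Polynomial.C a) * (Polynomial.X - 1) ^ k * Polynomial.X ^ ℓ) ∧
    (V.natDegree = 0 → ∃ (b : R) (k ℓ : ℕ), b ≠ 0 ∧
        V = Polynomial.C (Polynomial.C b * (Polynomial.X - 1) ^ k * Polynomial.X ^ ℓ)) :=
  brylawski_univariate_factors_general R n r c hc U V hU hdvd
end

section
/- Let R be a unique factorization domain and let T ∈ R[x,y] be an (n,r)-Brylawski polynomial with constant c ∈ R∖{0} (n ∈ ℕ, r ∈ ℤ). Suppose T = U·V with U, V ∈ R[x,y]. Then there exist integers m, s with 0 ≤ m ≤ n and nonzero elements a, b ∈ R with a·b = c such that U is an (n−m, r−s)-Brylawski polynomial with constant a and V is an (m, s)-Brylawski polynomial with constant b. -/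
/-!
Clearing the denominator `(Y - 1) ^ deg_x U` turns `U(Y/(Y-1), Y)` into a polynomial `P_U ∈ R[Y]`,
and the Brylawski identity for `T = U * V` becomes `P_U * P_V = c * Y ^ n * (Y - 1) ^ t` in `R[Y]`;
here `t ≥ 0`, since otherwise evaluating at `Y = 1` would give `c = 0`. As `Y` and `Y - 1` are
prime in `R[Y]`, splitting off their maximal powers from `P_U` and `P_V` leaves cofactors whose
product is the constant `c`, so both are constants. Thus `P_U = a * Y ^ i * (Y - 1) ^ j`, which is
the Brylawski identity for `U`, and likewise for `V`.
-/

open Polynomial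

section PrimePow
variable {α : Type*} [CommMonoidWithZero α] [IsCancelMulZero α] {p : α}

theorem Prime.eq_of_pow_mul_eq_pow_mul (hp : Prime p) {a b : ℕ} {x y : α} (hx : ¬p ∣ x)
    (hy : ¬p ∣ y) (h : p ^ a * x = p ^ b * y) : a = b ∧ x = y := by
  wlog hab : a ≤ b generalizing a b x y
  · exact (this hy hx h.symm (le_of_not_ge hab)).imp Eq.symm Eq.symm
  obtain ⟨k, rfl⟩ := exists_add_of_le hab
  rw [pow_add, mul_assoc] at h
  have hxy := mul_left_cancel₀ (pow_ne_zero a hp.ne_zero) h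
  cases k with
  | zero => simpa using hxy
  | succ k => exact absurd (hxy ▸ dvd_mul_of_dvd_left (dvd_pow_self p k.succ_ne_zero) y) hx

theorem Prime.add_eq_and_mul_eq_of_pow_mul_mul_pow_mul (hp : Prime p) {i k n : ℕ} {u v w : α}
    (hu : ¬p ∣ u) (hv : ¬p ∣ v) (hw : ¬p ∣ w) (h : p ^ i * u * (p ^ k * v) = p ^ n * w) :
    i + k = n ∧ u * v = w :=
  hp.eq_of_pow_mul_eq_pow_mul (a := i + k) (fun huv => (hp.dvd_mul.1 huv).elim hu hv) hw
    (by rw [pow_add, mul_mul_mul_comm, h])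

end PrimePow

namespace Polynomial
variable {R : Type*} [CommRing R]

theorem X_sub_one_dvd_iff {f : R[X]} : X - 1 ∣ f ↔ f.eval 1 = 0 := by
  rw [← C_1, dvd_iff_isRoot, IsRoot.def]

theorem exists_eq_X_pow_mul_X_sub_one_pow_mul {P : R[X]} (hP : P ≠ 0) :
    ∃ (i j : ℕ) (P₀ : R[X]),
      P = X ^ i * ((X - 1) ^ j * P₀) ∧ P₀.eval 0 ≠ 0 ∧ P₀.eval 1 ≠ 0 := by
  obtain ⟨P₁, hP₁, hX⟩ := exists_eq_pow_rootMultiplicity_mul_and_not_dvd P hP 0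
  rw [map_zero, sub_zero] at hP₁ hX
  have hP₁0 : P₁ ≠ 0 := by rintro rfl; exact hX (dvd_zero X)
  obtain ⟨P₀, hP₀, h1⟩ := exists_eq_pow_rootMultiplicity_mul_and_not_dvd P₁ hP₁0 1
  rw [map_one] at hP₀ h1
  rw [X_sub_one_dvd_iff] at h1
  rw [X_dvd_iff, hP₀, coeff_zero_eq_eval_zero] at hX
  refine ⟨_, _, P₀, hP₀ ▸ hP₁, fun h0 => hX (by simp [h0]), h1⟩

variable [IsDomain R]

theorem exists_eq_C_mul_X_pow_mul_X_sub_one_pow_of_mul_eq {P Q : R[X]} {c : R} {n t : ℕ}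
    (hc : c ≠ 0) (h : P * Q = C c * X ^ n * (X - 1) ^ t) :
    ∃ (a b : R) (i i' j j' : ℕ), P = C a * X ^ i * (X - 1) ^ j ∧
      Q = C b * X ^ i' * (X - 1) ^ j' ∧ a * b = c ∧ i + i' = n ∧ j + j' = t := by
  have hPQ : P * Q ≠ 0 := by
    rw [h]
    exact mul_ne_zero (mul_ne_zero (C_ne_zero.2 hc) (pow_ne_zero _ X_ne_zero))
      (pow_ne_zero _ (by simpa using X_sub_C_ne_zero (1 : R)))
  obtain ⟨i, j, P₀, rfl, hP0, hP1⟩ :=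
    exists_eq_X_pow_mul_X_sub_one_pow_mul (left_ne_zero_of_mul hPQ)
  obtain ⟨i', j', Q₀, rfl, hQ0, hQ1⟩ :=
    exists_eq_X_pow_mul_X_sub_one_pow_mul (right_ne_zero_of_mul hPQ)
  have hX1 : Prime (X - 1 : R[X]) := by simpa using prime_X_sub_C (1 : R)
  obtain ⟨hn, h'⟩ := (prime_X (R := R)).add_eq_and_mul_eq_of_pow_mul_mul_pow_mul
    (u := (X - 1) ^ j * P₀) (v := (X - 1) ^ j' * Q₀) (w := (X - 1) ^ t * C c)
    (by simp [X_dvd_iff, coeff_zero_eq_eval_zero, hP0])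
    (by simp [X_dvd_iff, coeff_zero_eq_eval_zero, hQ0])
    (by simp [X_dvd_iff, coeff_zero_eq_eval_zero, hc]) (h.trans (by ring))
  obtain ⟨ht, hc'⟩ := hX1.add_eq_and_mul_eq_of_pow_mul_mul_pow_mul
    (by simpa [X_sub_one_dvd_iff]) (by simpa [X_sub_one_dvd_iff]) (by simpa [X_sub_one_dvd_iff])
    h'
  have hP₀ : P₀ ≠ 0 := by rintro rfl; simp at hP0
  have hQ₀ : Q₀ ≠ 0 := by rintro rfl; simp at hQ0
  have hdeg : P₀.natDegree + Q₀.natDegree = 0 := by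
    rw [← natDegree_mul hP₀ hQ₀, hc', natDegree_C]
  rw [eq_C_of_natDegree_eq_zero (p := P₀) (by omega),
    eq_C_of_natDegree_eq_zero (p := Q₀) (by omega)] at hc' ⊢
  exact ⟨P₀.coeff 0, Q₀.coeff 0, i, i', j, j', by ring, by ring,
    C_injective (by rw [map_mul, hc']), hn, ht⟩

end Polynomial

theorem RatFunc.X_sub_one_ne_zero (K : Type*) [Field K] : (RatFunc.X - 1 : RatFunc K) ≠ 0 := by
  simpa [RatFunc.algebraMap_X] using RatFunc.algebraMap_ne_zero (K := K) (X_sub_C_ne_zero (1 : K))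

section Brylawski
variable (R : Type*) [CommRing R] [IsDomain R]

noncomputable def toRatFunc : R[X] →+* RatFunc (FractionRing R) :=
  (algebraMap (FractionRing R)[X] (RatFunc (FractionRing R))).comp
    (mapRingHom (algebraMap R (FractionRing R)))

theorem brylEval_eq_eval₂ (U : R[X][X]) :
    brylEval R U = U.eval₂ (toRatFunc R) (RatFunc.X / (RatFunc.X - 1)) := rfl

@[simp]
theorem toRatFunc_X : toRatFunc R X = RatFunc.X := by
  simp [toRatFunc, RatFunc.algebraMap_X]

@[simp]
theorem toRatFunc_C (a : R) : toRatFunc R (C a) = RatFunc.C (algebraMap R (FractionRing R) a) := by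
  simp [toRatFunc, RatFunc.algebraMap_C]

theorem toRatFunc_injective : Function.Injective (toRatFunc R) :=
  (RatFunc.algebraMap_injective _).comp
    (map_injective _ (IsFractionRing.injective R (FractionRing R)))

noncomputable def brylNumerator (U : R[X][X]) : R[X] :=
  ∑ i ∈ U.support, U.coeff i * X ^ i * (X - 1) ^ (U.natDegree - i)

theorem toRatFunc_brylNumerator (U : R[X][X]) :
    toRatFunc R (brylNumerator R U) = (RatFunc.X - 1) ^ U.natDegree * brylEval R U := by
  rw [brylEval_eq_eval₂, eval₂_eq_sum, sum_def, Finset.mul_sum, brylNumerator, map_sum]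
  refine Finset.sum_congr rfl fun i hi => ?_
  have hw := RatFunc.X_sub_one_ne_zero (FractionRing R)
  obtain ⟨k, hk⟩ := Nat.exists_eq_add_of_le (le_natDegree_of_mem_supp i hi)
  simp only [hk, Nat.add_sub_cancel_left, map_mul, map_pow, map_sub, map_one, toRatFunc_X]
  rw [pow_add, div_pow]
  field_simp

theorem isBrylawski_of_mul_brylEval_eq {U : R[X][X]} {d i j : ℕ} {a : R}
    (h : (RatFunc.X - 1) ^ d * brylEval R U = toRatFunc R (C a * X ^ i * (X - 1) ^ j)) :
    IsBrylawski R i ((d : ℤ) - j) a U := by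
  have hw := RatFunc.X_sub_one_ne_zero (FractionRing R)
  simp only [map_mul, map_pow, map_sub, map_one, toRatFunc_X, toRatFunc_C] at h
  rw [IsBrylawski, zpow_sub₀ hw, zpow_natCast, zpow_natCast, div_mul_eq_mul_div, h]
  field_simp

theorem exists_eq_C_mul_X_pow_mul_X_sub_one_pow_of_toRatFunc_eq {P : R[X]} {c : R} {n : ℕ}
    {z : ℤ} (hc : c ≠ 0) (h : toRatFunc R P =
      RatFunc.C (algebraMap R (FractionRing R) c) * RatFunc.X ^ n * (RatFunc.X - 1) ^ z) :
    ∃ t : ℕ, (t : ℤ) = z ∧ P = C c * X ^ n * (X - 1) ^ t := by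
  have hw := RatFunc.X_sub_one_ne_zero (FractionRing R)
  cases z with
  | ofNat t => exact ⟨t, rfl, toRatFunc_injective R (by simpa using h)⟩
  | negSucc k =>
    have h' : P * (X - 1) ^ (k + 1) = C c * X ^ n := toRatFunc_injective R (by
      simp only [map_mul, map_pow, map_sub, map_one, toRatFunc_X, toRatFunc_C, h, zpow_negSucc]
      field_simp)
    simpa [eq_comm, hc] using congrArg (eval 1) h'

end Brylawski

theorem brylawski_factorization_general (R : Type*) [CommRing R] [IsDomain R]
    (n : ℕ) (r : ℤ) (c : R) (hc : c ≠ 0)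
    (T U V : Polynomial (Polynomial R)) (hT : IsBrylawski R n r c T) (hUV : T = U * V) :
    ∃ (m : ℕ) (s : ℤ) (a b : R), m ≤ n ∧ a ≠ 0 ∧ b ≠ 0 ∧ a * b = c ∧
      IsBrylawski R (n - m) (r - s) a U ∧ IsBrylawski R m s b V := by
  have hw := RatFunc.X_sub_one_ne_zero (FractionRing R)
  have hPQ : toRatFunc R (brylNumerator R U * brylNumerator R V) =
      RatFunc.C (algebraMap R (FractionRing R) c) * RatFunc.X ^ n *
        (RatFunc.X - 1) ^ (((U.natDegree + V.natDegree : ℕ) : ℤ) - r) := by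
    rw [IsBrylawski, hUV, brylEval_eq_eval₂, eval₂_mul, ← brylEval_eq_eval₂,
      ← brylEval_eq_eval₂] at hT
    rw [map_mul, toRatFunc_brylNumerator, toRatFunc_brylNumerator, zpow_sub₀ hw, zpow_natCast,
      ← hT]
    field_simp
    ring
  obtain ⟨t, ht, hprod⟩ := exists_eq_C_mul_X_pow_mul_X_sub_one_pow_of_toRatFunc_eq R hc hPQ
  obtain ⟨a, b, i, i', j, j', hP, hQ, hab, rfl, rfl⟩ :=
    exists_eq_C_mul_X_pow_mul_X_sub_one_pow_of_mul_eq hc hprod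
  refine ⟨i', V.natDegree - j', a, b, Nat.le_add_left _ _, left_ne_zero_of_mul (hab ▸ hc),
    right_ne_zero_of_mul (hab ▸ hc), hab, ?_, ?_⟩
  · rw [Nat.add_sub_cancel, show r - (V.natDegree - j' : ℤ) = U.natDegree - j by omega]
    exact isBrylawski_of_mul_brylEval_eq R
      ((toRatFunc_brylNumerator R U).symm.trans (congrArg _ hP))
  · exact isBrylawski_of_mul_brylEval_eq R
      ((toRatFunc_brylNumerator R V).symm.trans (congrArg _ hQ))

/-- Over a UFD, any factorization `T = U·V` of an (n,r)-Brylawski polynomial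
with constant `c` splits as a product of an (n−m, r−s)-Brylawski polynomial with constant `a`
and an (m, s)-Brylawski polynomial with constant `b`, where `0 ≤ m ≤ n` and `a·b = c`. -/
theorem brylawski_factorization (R : Type*) [CommRing R] [IsDomain R]
    [UniqueFactorizationMonoid R] (n : ℕ) (r : ℤ) (c : R) (hc : c ≠ 0)
    (T U V : Polynomial (Polynomial R)) (hT : IsBrylawski R n r c T) (hUV : T = U * V) :
    ∃ (m : ℕ) (s : ℤ) (a b : R), m ≤ n ∧ a ≠ 0 ∧ b ≠ 0 ∧ a * b = c ∧
      IsBrylawski R (n - m) (r - s) a U ∧ IsBrylawski R m s b V :=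
  brylawski_factorization_general R n r c hc T U V hT hUV
end

section
/- Let M be a connected matroid on a finite ground set E with |E| ≥ 2, let T_M = Σ_{i,j} t_{i,j} x^i y^j ∈ ℤ[x,y] be its Tutte polynomial, let R be a nontrivial unique factorization domain, and let φ : ℤ → R be the canonical ring homomorphism. If φ(t_{1,0}) ≠ 0 (i.e. the characteristic of R does not divide t_{1,0}), then the image of T_M in R[x,y] (obtained by applying φ to the coefficients) is irreducible in R[x,y]. -/
/-- A circuit of a matroid: a minimal dependent set. -/
def Matroid.IsCircuit' {α : Type*} (M : Matroid α) (C : Set α) : Prop :=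
  M.Dep C ∧ ∀ D : Set α, M.Dep D → D ⊆ C → D = C

/-- A matroid is connected if its ground set is nonempty and any two distinct elements of
the ground set lie in a common circuit. -/
def Matroid.IsConnected' {α : Type*} (M : Matroid α) : Prop :=
  M.E.Nonempty ∧ ∀ e ∈ M.E, ∀ f ∈ M.E, e ≠ f →
    ∃ C : Set α, M.IsCircuit' C ∧ e ∈ C ∧ f ∈ C

/-- The (ℕ-valued) rank of a set in a matroid: the maximal cardinality of an independent
subset. -/
noncomputable def Matroid.rk' {α : Type*} (M : Matroid α) (A : Set α) : ℕ :=
  sSup {n : ℕ | ∃ I : Set α, I ⊆ A ∧ M.Indep I ∧ I.ncard = n}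

/-- The Tutte polynomial of a matroid with finite ground set, as an element of `ℤ[x,y]`
(with `x = X 0`, `y = X 1`):
`T_M(x,y) = Σ_{A ⊆ E} (x−1)^{rk E − rk A} (y−1)^{|A| − rk A}`. -/
noncomputable def Matroid.tutte {α : Type*} (M : Matroid α) (hE : M.E.Finite) :
    MvPolynomial (Fin 2) ℤ :=
  ∑ A ∈ hE.toFinset.powerset,
    (MvPolynomial.X 0 - 1) ^ (M.rk' M.E - M.rk' ↑A) *
      (MvPolynomial.X 1 - 1) ^ (A.card - M.rk' ↑A)

/-!
On the hyperbola `(x - 1)(y - 1) = 1` every term of the Tutte polynomial collapses to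
`(x - 1)^(r - |A|)`, so that `T(x, x/(x-1)) (x - 1)^(n - r) = x^n`, where `n = |E|` and `r` is the
rank. As `deg_x T ≤ r` and `deg_y T ≤ n - r`, clearing denominators turns a factorization
`T = P Q` into an identity `p₀ q₀ (X - 1)^(n - r) = X^n (X - 1)^(c + d)` in `R[X]`, where `c, d`
are the `y`-degrees of `P, Q` and `p₀, q₀` have degree at most `deg_x P + c`, `deg_x Q + d`.
The point `(0, 0)` lies on the hyperbola, so `t_{0,0} = 0` and `T` is not a unit; together with
`t_{1,0} ≠ 0` this forces one factor, say `Q`, to have a nonzero constant term. Then `q₀(0) ≠ 0`,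
so all of `X^n` divides `p₀`, and comparing degrees leaves no room for `Q` to involve `x` or `y`:
it is a constant dividing a monic polynomial, hence a unit.
-/

open MvPolynomial
open scoped Polynomial

namespace MvPolynomial

theorem degreeOf_map_le {σ R S : Type*} [CommSemiring R] [CommSemiring S] (f : R →+* S) (i : σ)
    (p : MvPolynomial σ R) : degreeOf i (map f p) ≤ degreeOf i p := by
  classical
  simpa only [degreeOf_def] using Multiset.count_le_of_le i degrees_map_le

theorem degreeOf_X_sub_one_pow_le {σ R : Type*} [CommRing R] [Nontrivial R] (i : σ) (k : ℕ) :
    degreeOf i ((X i - 1 : MvPolynomial σ R) ^ k) ≤ k := by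
  have h : degreeOf i (X i - 1 : MvPolynomial σ R) ≤ 1 :=
    (degreeOf_sub_le _ _ _).trans (by simp)
  simpa using (degreeOf_pow_le _ _ k).trans (Nat.mul_le_mul_left k h)

theorem degreeOf_X_sub_one_pow_of_ne {σ R : Type*} [CommRing R] {i j : σ} (hij : i ≠ j) (k : ℕ) :
    degreeOf i ((X j - 1 : MvPolynomial σ R) ^ k) = 0 := by
  have h : degreeOf i (X j - 1 : MvPolynomial σ R) = 0 :=
    Nat.eq_zero_of_le_zero <| (degreeOf_sub_le _ _ _).trans (by simp [degreeOf_X_of_ne hij])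
  have hk := degreeOf_pow_le i (X j - 1 : MvPolynomial σ R) k
  rw [h, mul_zero] at hk
  exact Nat.eq_zero_of_le_zero hk

theorem coeff_single_one_mul_eq_zero {σ R : Type*} [CommSemiring R] (i : σ)
    {p q : MvPolynomial σ R} (hp : constantCoeff p = 0) (hq : constantCoeff q = 0) :
    coeff (Finsupp.single i 1) (p * q) = 0 := by
  classical
  rw [coeff_mul, Finsupp.antidiagonal_single, Finset.sum_map]
  refine Finset.sum_eq_zero fun ⟨a, b⟩ hab ↦ ?_
  obtain ⟨rfl, rfl⟩ | ⟨rfl, rfl⟩ : a = 0 ∧ b = 1 ∨ a = 1 ∧ b = 0 := by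
    have := Finset.HasAntidiagonal.mem_antidiagonal.mp hab
    omega
  · simp [← constantCoeff_eq, hp]
  · simp [← constantCoeff_eq, hq]

theorem eq_C_of_forall_degreeOf_eq_zero {σ R : Type*} [CommSemiring R] {p : MvPolynomial σ R}
    (h : ∀ i, degreeOf i p = 0) : p = C (coeff 0 p) :=
  vars_eq_empty_iff_eq_C.mp <| Finset.eq_empty_of_forall_notMem fun i hi ↦
    mem_vars_iff_degreeOf_ne_zero.mp hi (h i)

variable (R : Type*) [CommRing R]

noncomputable def fracX : FractionRing R[X] := algebraMap R[X] (FractionRing R[X]) Polynomial.X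

theorem fracX_sub_one_ne_zero [IsDomain R] : fracX R - 1 ≠ 0 := by
  rw [fracX, ← map_one (algebraMap R[X] _), ← map_sub]
  exact (map_ne_zero_iff _ (IsFractionRing.injective _ _)).mpr (by
    simpa using Polynomial.X_sub_C_ne_zero (1 : R))

variable {R}

/-- `P(X, X/(X-1)) (X - 1)^c` with its denominators cleared, valid once `c ≥ deg_y P`. -/
noncomputable def hyperbolaNumerator (P : MvPolynomial (Fin 2) R) (c : ℕ) : R[X] :=
  ∑ m ∈ P.support,
    Polynomial.C (P.coeff m) * Polynomial.X ^ (m 0 + m 1) * (Polynomial.X - 1) ^ (c - m 1)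

theorem algebraMap_hyperbolaNumerator [IsDomain R] {P : MvPolynomial (Fin 2) R} {c : ℕ}
    (hc : degreeOf 1 P ≤ c) :
    algebraMap R[X] (FractionRing R[X]) (hyperbolaNumerator P c) =
      aeval ![fracX R, fracX R / (fracX R - 1)] P * (fracX R - 1) ^ c := by
  conv_rhs => rw [P.as_sum]
  rw [map_sum, Finset.sum_mul, hyperbolaNumerator, map_sum]
  refine Finset.sum_congr rfl fun m hm ↦ ?_
  have hm1 : m 1 ≤ c := (monomial_le_degreeOf 1 hm).trans hc
  rw [aeval_monomial, Finsupp.prod_pow, Fin.prod_univ_two,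
    IsScalarTower.algebraMap_apply R R[X] (FractionRing R[X]), Polynomial.algebraMap_apply]
  simp only [map_mul, map_pow, map_sub, map_one, Matrix.cons_val_zero, Matrix.cons_val_one,
    Matrix.cons_val_fin_one, Algebra.algebraMap_self, RingHom.id_apply]
  rw [← fracX, div_pow, pow_sub₀ _ (fracX_sub_one_ne_zero R) hm1, pow_add]
  ring

theorem hyperbolaNumerator_eval_zero (P : MvPolynomial (Fin 2) R) (c : ℕ) :
    (hyperbolaNumerator P c).eval 0 = (-1) ^ c * constantCoeff P := by
  rw [hyperbolaNumerator, Polynomial.eval_finsetSum, constantCoeff_eq, Finset.sum_eq_single 0]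
  · simp [mul_comm]
  · intro m _ hm
    have hdeg : m 0 + m 1 ≠ 0 := fun h ↦
      hm (Finsupp.ext (Fin.forall_fin_two.mpr (Nat.add_eq_zero_iff.mp h)))
    simp [zero_pow hdeg]
  · intro h
    simp [notMem_support_iff.mp h]

theorem natDegree_hyperbolaNumerator_le {P : MvPolynomial (Fin 2) R} {c : ℕ}
    (hc : degreeOf 1 P ≤ c) : (hyperbolaNumerator P c).natDegree ≤ degreeOf 0 P + c := by
  refine Polynomial.natDegree_sum_le_of_forall_le _ _ fun m hm ↦ ?_
  have h0 : m 0 ≤ degreeOf 0 P := monomial_le_degreeOf 0 hm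
  have h1 : m 1 ≤ c := (monomial_le_degreeOf 1 hm).trans hc
  have hX : (Polynomial.X - 1 : R[X]).natDegree ≤ 1 := by
    simpa using Polynomial.natDegree_X_sub_C_le (1 : R)
  have hpow := Polynomial.natDegree_X_pow_le (R := R) (m 0 + m 1)
  have hmul := Nat.mul_le_mul_left (c - m 1) hX
  refine (Polynomial.natDegree_mul_le.trans (add_le_add Polynomial.natDegree_mul_le
    Polynomial.natDegree_pow_le)).trans ?_
  rw [Polynomial.natDegree_C]
  omega

variable [IsDomain R]

theorem hyperbolaNumerator_mul_hyperbolaNumerator {P Q : MvPolynomial (Fin 2) R} {r s : ℕ}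
    (hF : aeval ![fracX R, fracX R / (fracX R - 1)] (P * Q) * (fracX R - 1) ^ s =
      fracX R ^ (r + s)) :
    hyperbolaNumerator P (degreeOf 1 P) * hyperbolaNumerator Q (degreeOf 1 Q) *
        (Polynomial.X - 1) ^ s =
      Polynomial.X ^ (r + s) * (Polynomial.X - 1) ^ (degreeOf 1 P + degreeOf 1 Q) := by
  apply IsFractionRing.injective R[X] (FractionRing R[X])
  rw [map_mul] at hF
  simp only [map_mul, map_pow, map_sub, map_one]
  rw [algebraMap_hyperbolaNumerator le_rfl, algebraMap_hyperbolaNumerator le_rfl, ← fracX]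
  linear_combination ((fracX R - 1) ^ degreeOf 1 P * (fracX R - 1) ^ degreeOf 1 Q) * hF

theorem isUnit_of_mul_hyperbola {P Q : MvPolynomial (Fin 2) R} {r s : ℕ}
    (hF : aeval ![fracX R, fracX R / (fracX R - 1)] (P * Q) * (fracX R - 1) ^ s =
      fracX R ^ (r + s))
    (h0 : degreeOf 0 (P * Q) ≤ r) (h1 : degreeOf 1 (P * Q) ≤ s) (hP : P ≠ 0)
    (hQ : constantCoeff Q ≠ 0) : IsUnit Q := by
  have hQ' : Q ≠ 0 := by rintro rfl; exact hQ (map_zero _)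
  have hX1 : (Polynomial.X - 1 : R[X]).Monic := by simpa using Polynomial.monic_X_sub_C (1 : R)
  have hid := hyperbolaNumerator_mul_hyperbolaNumerator hF
  set p₀ := hyperbolaNumerator P (degreeOf 1 P)
  set q₀ := hyperbolaNumerator Q (degreeOf 1 Q)
  have hp₀ : p₀ ≠ 0 := by
    rintro h
    rw [h, zero_mul, zero_mul] at hid
    exact ((Polynomial.monic_X_pow _).mul (hX1.pow _)).ne_zero hid.symm
  -- `q₀ (X - 1)^s` does not vanish at `0`, so the whole power of `X` goes into `p₀`
  have hdvd : Polynomial.X ^ (r + s) ∣ p₀ := by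
    refine Polynomial.prime_X.pow_dvd_of_dvd_mul_right _ ?_ ⟨_, (mul_assoc _ _ _).symm.trans hid⟩
    rw [Polynomial.X_dvd_iff, Polynomial.coeff_zero_eq_eval_zero, Polynomial.eval_mul,
      hyperbolaNumerator_eval_zero]
    simp [hQ]
  have hlen : r + s ≤ degreeOf 0 P + degreeOf 1 P :=
    (by simpa using Polynomial.natDegree_le_of_dvd hdvd hp₀ : r + s ≤ p₀.natDegree).trans
      (natDegree_hyperbolaNumerator_le le_rfl)
  have hx := degreeOf_mul_eq (n := 0) hP hQ'
  have hy := degreeOf_mul_eq (n := 1) hP hQ'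
  have hQx : degreeOf 0 Q = 0 := by omega
  have hQy : degreeOf 1 Q = 0 := by omega
  have hq₀ : q₀ = Polynomial.C (constantCoeff Q) := by
    have hdeg : q₀.natDegree ≤ 0 := (natDegree_hyperbolaNumerator_le le_rfl).trans (by omega)
    rw [Polynomial.eq_C_of_natDegree_le_zero hdeg, Polynomial.coeff_zero_eq_eval_zero,
      hyperbolaNumerator_eval_zero, hQy, pow_zero, one_mul]
  have hunit : IsUnit (constantCoeff Q) := by
    refine ((Polynomial.monic_X_pow (r + s)).mul
      (hX1.pow (degreeOf 1 P + degreeOf 1 Q))).C_dvd_iff_isUnit.mp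
      ⟨p₀ * (Polynomial.X - 1) ^ s, ?_⟩
    rw [← hid, hq₀]
    ring
  rw [eq_C_of_forall_degreeOf_eq_zero (Fin.forall_fin_two.mpr ⟨hQx, hQy⟩), ← constantCoeff_eq]
  exact hunit.map C

theorem irreducible_of_hyperbola {F : MvPolynomial (Fin 2) R} {r s : ℕ}
    (hF : aeval ![fracX R, fracX R / (fracX R - 1)] F * (fracX R - 1) ^ s = fracX R ^ (r + s))
    (h0 : degreeOf 0 F ≤ r) (h1 : degreeOf 1 F ≤ s) (hlin : coeff (Finsupp.single 0 1) F ≠ 0) :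
    Irreducible F := by
  have hr : 1 ≤ r := by
    simpa using (monomial_le_degreeOf 0 (mem_support_iff.mpr hlin)).trans h0
  have hcc : constantCoeff F = 0 := by
    have hnum : hyperbolaNumerator F s = Polynomial.X ^ (r + s) := by
      apply IsFractionRing.injective R[X] (FractionRing R[X])
      rw [algebraMap_hyperbolaNumerator h1, hF, map_pow]
      rfl
    have := hyperbolaNumerator_eval_zero F s
    rw [hnum, Polynomial.eval_pow, Polynomial.eval_X, zero_pow (by omega)] at this
    exact (mul_eq_zero.mp this.symm).resolve_left (pow_ne_zero _ (neg_ne_zero.mpr one_ne_zero))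
  refine ⟨fun hu ↦ not_isUnit_zero (hcc ▸ hu.map constantCoeff), fun P Q hPQ ↦ ?_⟩
  subst hPQ
  have hF0 : P * Q ≠ 0 := by rintro h; simp [h] at hlin
  by_cases hQ : constantCoeff Q = 0
  · have hP : constantCoeff P ≠ 0 := fun hP ↦ hlin (coeff_single_one_mul_eq_zero 0 hP hQ)
    rw [mul_comm P Q] at hF h0 h1
    exact Or.inl (isUnit_of_mul_hyperbola hF h0 h1 (right_ne_zero_of_mul hF0) hP)
  · exact Or.inr (isUnit_of_mul_hyperbola hF h0 h1 (left_ne_zero_of_mul hF0) hQ)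

end MvPolynomial

namespace Matroid

variable {α : Type*} (M : Matroid α)

theorem cast_rk'_eq_eRk {A : Set α} (hA : A.Finite) : (M.rk' A : ℕ∞) = M.eRk A := by
  have hfin : M.eRk A ≠ ⊤ := ((M.eRk_le_encard A).trans_lt hA.encard_lt_top).ne
  suffices h : IsGreatest {n : ℕ | ∃ I : Set α, I ⊆ A ∧ M.Indep I ∧ I.ncard = n}
      (M.eRk A).toNat by
    rw [Matroid.rk', h.csSup_eq, ENat.natCast_toNat hfin]
  refine ⟨?_, ?_⟩
  · obtain ⟨I, hIA, hI, hIr⟩ := M.le_eRk_iff.mp le_rfl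
    exact ⟨I, hIA, hI, by rw [Set.ncard_def, hIr]⟩
  · rintro _ ⟨I, hIA, hI, rfl⟩
    rw [Set.ncard_def]
    exact ENat.toNat_le_toNat (hI.encard_le_eRk_of_subset hIA) hfin

theorem rk'_mono {A B : Set α} (hB : B.Finite) (hAB : A ⊆ B) : M.rk' A ≤ M.rk' B := by
  have h := M.eRk_mono hAB
  rwa [← M.cast_rk'_eq_eRk hB, ← M.cast_rk'_eq_eRk (hB.subset hAB), Nat.cast_le] at h

theorem rk'_le_ncard {A : Set α} (hA : A.Finite) : M.rk' A ≤ A.ncard := by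
  have h := M.eRk_le_encard A
  rwa [← M.cast_rk'_eq_eRk hA, ← hA.cast_ncard_eq, Nat.cast_le] at h

theorem rk'_le_rk'_add_ncard_diff {A B : Set α} (hB : B.Finite) (hAB : A ⊆ B) :
    M.rk' B ≤ M.rk' A + (B \ A).ncard := by
  have h := (M.eRk_le_eRk_add_eRk_sdiff hAB).trans (add_le_add le_rfl (M.eRk_le_encard _))
  rwa [← M.cast_rk'_eq_eRk hB, ← M.cast_rk'_eq_eRk (hB.subset hAB),
    ← (hB.subset Set.sdiff_subset).cast_ncard_eq, ← Nat.cast_add, Nat.cast_le] at h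

variable (hE : M.E.Finite)

theorem rk'_bounds_of_mem_powerset {A : Finset α} (hA : A ∈ hE.toFinset.powerset) :
    M.rk' A ≤ M.rk' M.E ∧ M.rk' A ≤ A.card ∧ M.rk' M.E + A.card ≤ M.rk' A + hE.toFinset.card ∧
      A.card ≤ hE.toFinset.card := by
  have hAE : (A : Set α) ⊆ M.E := fun _ hx ↦ hE.mem_toFinset.mp (Finset.mem_powerset.mp hA hx)
  have hdiff : (M.E \ A).ncard + A.card = hE.toFinset.card := by
    rw [Set.ncard_sdiff hAE A.finite_toSet, Set.ncard_coe_finset, Set.ncard_eq_toFinset_card _ hE,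
      Nat.sub_add_cancel (Finset.card_le_card (Finset.mem_powerset.mp hA))]
  have h := M.rk'_le_rk'_add_ncard_diff hE hAE
  refine ⟨M.rk'_mono hE hAE, ?_, by omega, Finset.card_le_card (Finset.mem_powerset.mp hA)⟩
  simpa using M.rk'_le_ncard A.finite_toSet

theorem rk'_ground_le_card : M.rk' M.E ≤ hE.toFinset.card := by
  simpa [Set.ncard_eq_toFinset_card _ hE] using M.rk'_le_ncard hE

theorem degreeOf_zero_tutte_le : degreeOf 0 (M.tutte hE) ≤ M.rk' M.E := by
  refine (degreeOf_sum_le _ _ _).trans (Finset.sup_le fun A _ ↦ (degreeOf_mul_le _ _ _).trans ?_)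
  rw [degreeOf_X_sub_one_pow_of_ne zero_ne_one]
  exact (degreeOf_X_sub_one_pow_le _ _).trans (Nat.sub_le _ _)

theorem degreeOf_one_tutte_le :
    degreeOf 1 (M.tutte hE) ≤ hE.toFinset.card - M.rk' M.E := by
  refine (degreeOf_sum_le _ _ _).trans (Finset.sup_le fun A hA ↦ (degreeOf_mul_le _ _ _).trans ?_)
  rw [degreeOf_X_sub_one_pow_of_ne one_ne_zero, zero_add]
  have := M.rk'_bounds_of_mem_powerset hE hA
  exact (degreeOf_X_sub_one_pow_le _ _).trans (by omega)

theorem eval₂_tutte_mul_pow_of_hyperbola {S : Type*} [CommRing S] {x y : S}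
    (hxy : (x - 1) * (y - 1) = 1) :
    eval₂ (Int.castRingHom S) ![x, y] (M.tutte hE) * (x - 1) ^ (hE.toFinset.card - M.rk' M.E) =
      x ^ hE.toFinset.card := by
  -- the `1 ^ A.card` puts the sum in the shape of `Finset.sum_pow_mul_eq_add_pow`
  have hterm : ∀ A ∈ hE.toFinset.powerset,
      (x - 1) ^ (M.rk' M.E - M.rk' A) * (y - 1) ^ (A.card - M.rk' A) *
          (x - 1) ^ (hE.toFinset.card - M.rk' M.E) =
        1 ^ A.card * (x - 1) ^ (hE.toFinset.card - A.card) := by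
    intro A hA
    obtain ⟨h1, h2, -, h4⟩ := M.rk'_bounds_of_mem_powerset hE hA
    have hexp : M.rk' M.E - M.rk' A + (hE.toFinset.card - M.rk' M.E) =
        hE.toFinset.card - A.card + (A.card - M.rk' A) := by
      have := M.rk'_ground_le_card hE
      omega
    rw [mul_right_comm, ← pow_add, hexp, pow_add, mul_assoc, ← mul_pow, hxy, one_pow, one_pow,
      one_mul, mul_one]
  simp only [Matroid.tutte, ← coe_eval₂Hom, map_sum, map_mul, map_pow, map_sub, map_one,
    eval₂Hom_X', Matrix.cons_val_zero, Matrix.cons_val_one, Finset.sum_mul]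
  rw [Finset.sum_congr rfl hterm, Finset.sum_pow_mul_eq_add_pow, add_sub_cancel]

end Matroid

theorem tutte_irreducible_of_connected_general {α : Type*} (M : Matroid α) (hE : M.E.Finite)
    (R : Type*) [CommRing R] [IsDomain R]
    (ht : (Int.castRingHom R) ((M.tutte hE).coeff (Finsupp.single 0 1)) ≠ 0) :
    Irreducible (MvPolynomial.map (Int.castRingHom R) (M.tutte hE)) := by
  have hxy : (fracX R - 1) * (fracX R / (fracX R - 1) - 1) = 1 := by
    field_simp [fracX_sub_one_ne_zero R]
    ring
  refine irreducible_of_hyperbola (r := M.rk' M.E) (s := hE.toFinset.card - M.rk' M.E) ?_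
    ((degreeOf_map_le _ _ _).trans (M.degreeOf_zero_tutte_le hE))
    ((degreeOf_map_le _ _ _).trans (M.degreeOf_one_tutte_le hE)) (by rwa [coeff_map])
  rw [aeval_def, eval₂_map, RingHom.ext_int ((algebraMap R _).comp _) (Int.castRingHom _),
    Nat.add_sub_cancel' (M.rk'_ground_le_card hE)]
  exact M.eval₂_tutte_mul_pow_of_hyperbola hE hxy

/-- Merino–de Mier–Noy, over a UFD. Let `M` be a connected matroid on a
finite ground set with at least two elements, `T_M` its Tutte polynomial, `R` a nontrivial
UFD and `φ : ℤ → R` the canonical ring homomorphism. If `φ(t_{1,0}) ≠ 0`, then the image of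
`T_M` in `R[x,y]` is irreducible. -/
theorem tutte_irreducible_of_connected {α : Type*} (M : Matroid α) (hE : M.E.Finite)
    (hcard : 2 ≤ hE.toFinset.card) (hconn : M.IsConnected')
    (R : Type*) [CommRing R] [IsDomain R] [UniqueFactorizationMonoid R]
    (ht : (Int.castRingHom R) ((M.tutte hE).coeff (Finsupp.single 0 1)) ≠ 0) :
    Irreducible (MvPolynomial.map (Int.castRingHom R) (M.tutte hE)) :=
  tutte_irreducible_of_connected_general M hE R ht
end

section
/- Let r ≥ 2 and let T₁, T₂ ∈ ℤ[x,y] both be squarefree, monic of degree r when viewed as polynomials in x with coefficients in ℤ[y], and coprime in the sense that every common divisor of T₁ and T₂ in ℤ[x,y] is a unit. Then there exists t₀ ∈ ℤ such that for every integer t ≥ t₀ there is a constant C (depending on T₁, T₂ and t) such that for every prime number p ≥ C, the polynomials obtained from T₁ and T₂ by substituting y = t and reducing the coefficients modulo p are squarefree elements of 𝔽_p[x] and are coprime in 𝔽_p[x]. -/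
open Polynomial

private abbrev Rz : Type := Polynomial ℤ
private abbrev Kz : Type := FractionRing (Polynomial ℤ)

/-- A monic squarefree polynomial over `ℤ[y]` stays squarefree over the fraction field. -/
lemma squarefree_map_fractionRing' {T : Polynomial Rz} (hm : T.Monic) (hsq : Squarefree T) :
    Squarefree (T.map (algebraMap Rz Kz)) := by
  intro d hd
  have hT0 : T.map (algebraMap Rz Kz) ≠ 0 := (hm.map _).ne_zero
  have hd0 : d ≠ 0 := by
    rintro rfl
    rw [mul_zero] at hd
    exact hT0 (zero_dvd_iff.mp hd)
  obtain ⟨D, hD⟩ := IsIntegrallyClosed.eq_map_mul_C_of_dvd Kz hm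
    (dvd_trans (dvd_mul_right d d) hd)
  have hlc : d.leadingCoeff ≠ 0 := leadingCoeff_ne_zero.mpr hd0
  have hassoc : Associated (D.map (algebraMap Rz Kz)) d := ⟨(isUnit_C.mpr hlc.isUnit).unit, hD⟩
  have hDm : D.Monic := by
    apply Polynomial.monic_of_injective (IsFractionRing.injective Rz Kz)
    have h2 : D.map (algebraMap Rz Kz) = d * C d.leadingCoeff⁻¹ := by
      have h3 := congrArg (fun q => q * C d.leadingCoeff⁻¹) hD
      simpa [mul_assoc, ← C_mul, mul_inv_cancel₀ hlc] using h3
    rw [h2]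
    exact monic_mul_leadingCoeff_inv hd0
  have hDDdvd : (D * D) ∣ T := by
    apply Monic.dvd_of_fraction_map_dvd_fraction_map (K := Kz) hm (hDm.mul hDm)
    rw [Polynomial.map_mul]
    exact ((hassoc.mul_mul hassoc).dvd_iff_dvd_left).mpr hd
  have hu : IsUnit D := hsq D hDDdvd
  exact hassoc.isUnit (hu.map (mapRingHom (algebraMap Rz Kz)))

/-- Bezout-type identity for a monic squarefree polynomial and its derivative,
with a nonzero constant in `ℤ[y]`. -/
lemma exists_bezout' {T : Polynomial Rz} (hm : T.Monic) (hsq : Squarefree T) :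
    ∃ (U V : Polynomial Rz) (c : Rz), c ≠ 0 ∧ U * T + V * T.derivative = C c := by
  have hsqK : Squarefree (T.map (algebraMap Rz Kz)) := squarefree_map_fractionRing' hm hsq
  have hsep : (T.map (algebraMap Rz Kz)).Separable :=
    PerfectField.separable_iff_squarefree.mpr hsqK
  obtain ⟨a, b, hab⟩ := hsep
  rw [derivative_map] at hab
  obtain ⟨c₁, hA⟩ := IsLocalization.integerNormalization_map_to_map (nonZeroDivisors Rz) a
  obtain ⟨c₂, hB⟩ := IsLocalization.integerNormalization_map_to_map (nonZeroDivisors Rz) b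
  set A := IsLocalization.integerNormalization (nonZeroDivisors Rz) a
  set B := IsLocalization.integerNormalization (nonZeroDivisors Rz) b
  refine ⟨C (c₂ : Rz) * A, C (c₁ : Rz) * B, (c₁ : Rz) * (c₂ : Rz),
    mul_ne_zero (nonZeroDivisors.coe_ne_zero c₁) (nonZeroDivisors.coe_ne_zero c₂), ?_⟩
  apply Polynomial.map_injective (algebraMap Rz Kz) (IsFractionRing.injective Rz Kz)
  have hsm : ∀ (u : Rz) (q : Polynomial Kz), u • q = C (algebraMap Rz Kz u) * q := by
    intro u q
    rw [← smul_eq_C_mul, algebraMap_smul]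
  simp only [Polynomial.map_add, Polynomial.map_mul, map_C, hA, hB, derivative_map, hsm,
    map_mul, C_mul]
  linear_combination (C ((algebraMap Rz Kz) (c₁ : Rz)) * C ((algebraMap Rz Kz) (c₂ : Rz))) * hab

/-- The polynomial obtained from `T ∈ (ℤ[y])[x]` by substituting `y = t` and reducing the
coefficients modulo `p`. -/
noncomputable def specMod (T : Polynomial (Polynomial ℤ)) (t : ℤ) (p : ℕ) :
    Polynomial (ZMod p) :=
  (T.map (Polynomial.evalRingHom t)).map (Int.castRingHom (ZMod p))

set_option synthInstance.maxHeartbeats 800000 in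
/-- Let `r ≥ 2` and let `T₁, T₂ ∈ ℤ[x,y]` be squarefree, monic of degree `r`
in `x`, and coprime (every common divisor is a unit). Then there is `t₀ ∈ ℤ` such that for
every `t ≥ t₀` there is a constant `C` such that for every prime `p ≥ C`, the reductions of
`T₁` and `T₂` at `y = t` modulo `p` are squarefree and coprime in `𝔽_p[x]`. -/
theorem specializations_squarefree_coprime (r : ℕ) (hr : 2 ≤ r)
    (T₁ T₂ : Polynomial (Polynomial ℤ))
    (hsq₁ : Squarefree T₁) (hsq₂ : Squarefree T₂)
    (hm₁ : T₁.Monic) (hm₂ : T₂.Monic)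
    (hd₁ : T₁.natDegree = r) (hd₂ : T₂.natDegree = r)
    (hcop : ∀ d : Polynomial (Polynomial ℤ), d ∣ T₁ → d ∣ T₂ → IsUnit d) :
    ∃ t₀ : ℤ, ∀ t : ℤ, t₀ ≤ t → ∃ C : ℕ, ∀ p : ℕ, p.Prime → C ≤ p →
      Squarefree (specMod T₁ t p) ∧ Squarefree (specMod T₂ t p) ∧
        IsCoprime (specMod T₁ t p) (specMod T₂ t p) := by
  classical
  set T : Polynomial Rz := T₁ * T₂ with hT
  have hm : T.Monic := hm₁.mul hm₂
  haveI : DecompositionMonoid (Polynomial Rz) := inferInstance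
  have hsq : Squarefree T := by
    rw [hT, squarefree_mul_iff]
    exact ⟨fun {d} h1 h2 => hcop d h1 h2, hsq₁, hsq₂⟩
  obtain ⟨U, V, c, hc0, hid⟩ := exists_bezout' hm hsq
  refine ⟨((c.roots.toFinset.sup Int.toNat : ℕ) : ℤ) + 1, fun t ht => ?_⟩
  have hct : c.eval t ≠ 0 := by
    intro h
    have htr : t ∈ c.roots.toFinset := by
      rw [Multiset.mem_toFinset, mem_roots hc0]
      exact h
    have h1 : t.toNat ≤ c.roots.toFinset.sup Int.toNat := Finset.le_sup htr
    have h2 : t ≤ ((t.toNat : ℕ) : ℤ) := Int.self_le_toNat t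
    omega
  refine ⟨(c.eval t).natAbs + 1, fun p hp hpC => ?_⟩
  haveI : Fact p.Prime := ⟨hp⟩
  set ψ : Rz →+* ZMod p := (Int.castRingHom (ZMod p)).comp (evalRingHom t) with hψ
  have hspec : ∀ S : Polynomial Rz, specMod S t p = S.map ψ := by
    intro S
    rw [specMod, Polynomial.map_map]
  have hψc : ψ c ≠ 0 := by
    intro h
    have h0 : ((c.eval t : ℤ) : ZMod p) = 0 := h
    rw [ZMod.intCast_zmod_eq_zero_iff_dvd] at h0
    have h1 : p ∣ (c.eval t).natAbs := Int.natAbs_dvd_natAbs.mpr (by simpa using h0)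
    have h2 : p ≤ (c.eval t).natAbs := Nat.le_of_dvd (Int.natAbs_pos.mpr hct) h1
    omega
  have hidp : (U.map ψ) * (T.map ψ) + (V.map ψ) * derivative (T.map ψ) = C (ψ c) := by
    have h3 := congrArg (Polynomial.map ψ) hid
    simpa [Polynomial.map_add, Polynomial.map_mul, derivative_map, map_C] using h3
  have hcoprime : IsCoprime (T.map ψ) (derivative (T.map ψ)) := by
    refine ⟨C (ψ c)⁻¹ * (U.map ψ), C (ψ c)⁻¹ * (V.map ψ), ?_⟩
    rw [mul_assoc, mul_assoc, ← mul_add, hidp, ← C_mul, inv_mul_cancel₀ hψc, C_1]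
  have hsep : (T.map ψ).Separable := hcoprime
  have hsf : Squarefree ((T₁.map ψ) * (T₂.map ψ)) := by
    have := hsep.squarefree
    rwa [hT, Polynomial.map_mul] at this
  refine ⟨?_, ?_, ?_⟩
  · rw [hspec]
    exact hsf.of_mul_left
  · rw [hspec]
    exact hsf.of_mul_right
  · rw [hspec, hspec]
    rw [← EuclideanDomain.gcd_isUnit_iff]
    exact hsf _ (mul_dvd_mul (EuclideanDomain.gcd_dvd_left _ _) (EuclideanDomain.gcd_dvd_right _ _))
end
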